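/- arXiv:2006.01468 — 3 statements merged into one kernel-verified Lean document; each statement's English description precedes it below -/
import Mathlib

section
/- For every u in the enlarged Bargmann-Fock space Ẽ and all 1 ≤ p ≤ q ≤ ∞, there is a constant C (independent of u) such that ‖u‖_{L^q(ℂ)} ≤ C ‖u‖_{L^p(ℂ)}. In particular ‖u‖_{L^∞(ℂ)} ≤ (1/√π)‖u‖_{L²(ℂ)} for u ∈ E. -/
open MeasureTheory Complex ENNReal

noncomputable section

/-- Membership in the enlarged Bargmann-Fock space Ẽ: u = f e^{-|z|²/2} with f entire. -/
def tildeE (u : ℂ → ℂ) : Prop :=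
  ∃ f : ℂ → ℂ, Differentiable ℂ f ∧
    ∀ z, u z = f z * Complex.exp (-((‖z‖ ^ 2 : ℝ) : ℂ) / 2)

/-!
Fix `u = f e^{-|z|²/2}` in `Ẽ` and a point `z`. The function
`g w = f (z + w) e^{-z̄ w - |z|²/2}` is entire and, since `|z + w|² = |z|² + 2 Re (z̄ w) + |w|²`,
satisfies `|g w| e^{-|w|²} = |u (z + w)| e^{-|w|²/2}`. Integrating the mean value inequality
`|g 0| ≤ ⨍ |g|` over circles against the radial weight `e^{-r²}` gives
`π |u z| ≤ ∫ |u (z + w)| e^{-|w|²/2} dw`, i.e. `|u| ≤ ψ ⋆ |u|` with `ψ w = π⁻¹ e^{-|w|²/2}`.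
Hölder's inequality turns this into `‖u‖_∞ ≤ ‖ψ‖_{p'} ‖u‖_p`, with `‖ψ‖_2 = π^{-1/2}`, and the
interpolation `‖u‖_q ≤ ‖u‖_∞^{1 - p/q} ‖u‖_p^{p/q}` gives the `L^q` bound.
-/

open Set
open scoped Real

theorem ENNReal.toReal_div_toReal_le_one {p q : ℝ≥0∞} (hpq : p ≤ q) : p.toReal / q.toReal ≤ 1 := by
  rcases eq_or_ne q ∞ with rfl | hq
  · simp
  · exact div_le_one_of_le₀ (ENNReal.toReal_mono hq hpq) ENNReal.toReal_nonneg

namespace MeasureTheory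

variable {α E : Type*} [MeasurableSpace α] {μ : Measure α} [NormedAddCommGroup E]

theorem eLpNorm_le_eLpNorm_top_rpow_mul_eLpNorm_rpow {f : α → E} (hf : AEStronglyMeasurable f μ)
    {p q : ℝ≥0∞} (hp : p ≠ 0) (hpq : p ≤ q) :
    eLpNorm f q μ ≤
      eLpNorm f ∞ μ ^ (1 - p.toReal / q.toReal) * eLpNorm f p μ ^ (p.toReal / q.toReal) := by
  rcases eq_or_ne q ∞ with rfl | hq
  · simp
  have hp_top : p ≠ ∞ := ne_top_of_le_ne_top hq hpq
  have hs : 0 < p.toReal := ENNReal.toReal_pos hp hp_top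
  have hst : p.toReal ≤ q.toReal := ENNReal.toReal_mono hq hpq
  have ht : 0 < q.toReal := hs.trans_le hst
  set M := eLpNorm f ∞ μ with hM
  have hpoint : ∀ᵐ x ∂μ, ‖f x‖ₑ ^ q.toReal ≤ M ^ (q.toReal - p.toReal) * ‖f x‖ₑ ^ p.toReal := by
    filter_upwards [ae_le_eLpNormEssSup (f := f)] with x hx
    rw [← sub_add_cancel q.toReal p.toReal,
      ENNReal.rpow_add_of_nonneg _ _ (sub_nonneg.2 hst) hs.le, add_sub_cancel_right]
    gcongr
    rwa [hM, eLpNorm_exponent_top]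
  have hint : ∫⁻ x, ‖f x‖ₑ ^ q.toReal ∂μ
      ≤ M ^ (q.toReal - p.toReal) * ∫⁻ x, ‖f x‖ₑ ^ p.toReal ∂μ := by
    rw [← lintegral_const_mul'' _ (hf.enorm.pow_const _)]
    exact lintegral_mono_ae hpoint
  rw [eLpNorm_eq_lintegral_rpow_enorm_toReal (hp.bot_lt.trans_le hpq).ne' hq,
    eLpNorm_eq_lintegral_rpow_enorm_toReal hp hp_top, ← ENNReal.rpow_mul]
  calc (∫⁻ x, ‖f x‖ₑ ^ q.toReal ∂μ) ^ (1 / q.toReal)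
      ≤ (M ^ (q.toReal - p.toReal) * ∫⁻ x, ‖f x‖ₑ ^ p.toReal ∂μ) ^ (1 / q.toReal) := by
        gcongr
    _ = _ := by
        rw [ENNReal.mul_rpow_of_nonneg _ _ (by positivity), ← ENNReal.rpow_mul]
        congr 2 <;> field_simp

theorem eLpNorm_le_rpow_mul_eLpNorm_of_eLpNorm_top_le {f : α → E}
    (hf : AEStronglyMeasurable f μ) {p q : ℝ≥0∞} (hp : p ≠ 0) (hpq : p ≤ q) {K : ℝ≥0∞}
    (hK : eLpNorm f ∞ μ ≤ K * eLpNorm f p μ) :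
    eLpNorm f q μ ≤ K ^ (1 - p.toReal / q.toReal) * eLpNorm f p μ := by
  set θ := p.toReal / q.toReal
  have hθ : θ ≤ 1 := toReal_div_toReal_le_one hpq
  have hθ0 : 0 ≤ θ := by positivity
  calc eLpNorm f q μ ≤ eLpNorm f ∞ μ ^ (1 - θ) * eLpNorm f p μ ^ θ :=
        eLpNorm_le_eLpNorm_top_rpow_mul_eLpNorm_rpow hf hp hpq
    _ ≤ (K * eLpNorm f p μ) ^ (1 - θ) * eLpNorm f p μ ^ θ := by gcongr
    _ = K ^ (1 - θ) * eLpNorm f p μ := by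
        rw [ENNReal.mul_rpow_of_nonneg _ _ (by linarith), mul_assoc,
          ← ENNReal.rpow_add_of_nonneg _ _ (by linarith) hθ0, sub_add_cancel, ENNReal.rpow_one]

end MeasureTheory

theorem Complex.polarCoord_symm_eq_circleMap (p : ℝ × ℝ) :
    Complex.polarCoord.symm p = circleMap 0 p.1 p.2 := by
  simp [circleMap, Complex.exp_mul_I, ← Complex.ofReal_cos, ← Complex.ofReal_sin]

section MeanValue

variable {E : Type*} [NormedAddCommGroup E] [NormedSpace ℂ E] [CompleteSpace E]

theorem ofReal_two_pi_mul_enorm_le_lintegral_circleMap {f : ℂ → E} (hf : Differentiable ℂ f) (r : ℝ) :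
    ENNReal.ofReal (2 * π) * ‖f 0‖ₑ ≤ ∫⁻ θ in Ioo (-π) π, ‖f (circleMap 0 r θ)‖ₑ := by
  have hmean : f 0 = (2 * π)⁻¹ • ∫ θ in -π..π, f (circleMap 0 r θ) := by
    rw [← hf.diffContOnCl.circleAverage (c := 0) (R := r), Real.circleAverage_eq_integral_add (-π),
      intervalIntegral.integral_comp_add_right (fun θ ↦ f (circleMap 0 r θ))]
    congr 3 <;> ring
  calc ENNReal.ofReal (2 * π) * ‖f 0‖ₑ = ‖∫ θ in -π..π, f (circleMap 0 r θ)‖ₑ := by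
        rw [hmean, enorm_smul, ← mul_assoc, Real.enorm_eq_ofReal (by positivity),
          ← ENNReal.ofReal_mul (by positivity), mul_inv_cancel₀ (by positivity),
          ENNReal.ofReal_one, one_mul]
    _ ≤ ∫⁻ θ in Ioc (-π) π, ‖f (circleMap 0 r θ)‖ₑ := by
        rw [intervalIntegral.integral_of_le (by linarith [Real.pi_pos])]
        exact enorm_integral_le_lintegral_enorm _
    _ = ∫⁻ θ in Ioo (-π) π, ‖f (circleMap 0 r θ)‖ₑ := setLIntegral_congr Ioo_ae_eq_Ioc.symm

theorem enorm_mul_lintegral_radial_le {f : ℂ → E} (hf : Differentiable ℂ f) {ρ : ℝ → ℝ≥0∞}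
    (hρ : Measurable ρ) : ‖f 0‖ₑ * ∫⁻ z : ℂ, ρ ‖z‖ ≤ ∫⁻ z, ‖f z‖ₑ * ρ ‖z‖ := by
  rw [← lintegral_const_mul' _ _ enorm_ne_top, ← Complex.lintegral_comp_polarCoord_symm,
    ← Complex.lintegral_comp_polarCoord_symm, polarCoord_target, Measure.volume_eq_prod,
    ← Measure.prod_restrict]
  simp only [polarCoord_symm_eq_circleMap, norm_circleMap_zero, smul_eq_mul]
  have hfc : Measurable fun p : ℝ × ℝ ↦ ‖f (circleMap 0 p.1 p.2)‖ₑ :=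
    (hf.continuous.comp Real.circleMap.continuous).enorm.measurable
  rw [lintegral_prod _ (by fun_prop), lintegral_prod _ (by fun_prop)]
  refine lintegral_mono fun r ↦ ?_
  calc ∫⁻ _ in Ioo (-π) π, ENNReal.ofReal r * (‖f 0‖ₑ * ρ |r|)
      = ENNReal.ofReal r * ρ |r| * (ENNReal.ofReal (2 * π) * ‖f 0‖ₑ) := by
        rw [setLIntegral_const, Real.volume_Ioo, sub_neg_eq_add, ← two_mul]
        ac_rfl
    _ ≤ ENNReal.ofReal r * ρ |r| * ∫⁻ θ in Ioo (-π) π, ‖f (circleMap 0 r θ)‖ₑ := by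
        gcongr
        exact ofReal_two_pi_mul_enorm_le_lintegral_circleMap hf r
    _ = ∫⁻ θ in Ioo (-π) π, ENNReal.ofReal r * ρ |r| * ‖f (circleMap 0 r θ)‖ₑ :=
        (lintegral_const_mul _ (hfc.comp measurable_prodMk_left)).symm
    _ = ∫⁻ θ in Ioo (-π) π, ENNReal.ofReal r * (‖f (circleMap 0 r θ)‖ₑ * ρ |r|) := by
        refine lintegral_congr fun θ ↦ ?_
        ring

end MeanValue

theorem Complex.lintegral_exp_neg_mul_norm_sq {b : ℝ} (hb : 0 < b) :
    ∫⁻ z : ℂ, ENNReal.ofReal (Real.exp (-b * ‖z‖ ^ 2)) = ENNReal.ofReal (π / b) := by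
  have hint : ∫ z : ℂ, Real.exp (-b * ‖z‖ ^ 2) = π / b := by
    rw [GaussianFourier.integral_rexp_neg_mul_sq_norm hb]
    simp
  rw [← ofReal_integral_eq_lintegral_ofReal (Integrable.of_integral_ne_zero (by
    rw [hint]; positivity)) (.of_forall fun _ ↦ by positivity), hint]

theorem tildeE.ofReal_pi_mul_enorm_le {u : ℂ → ℂ} (hu : tildeE u) (z : ℂ) :
    ENNReal.ofReal π * ‖u z‖ₑ ≤ ∫⁻ w, ‖u (z + w)‖ₑ * ENNReal.ofReal (Real.exp (-‖w‖ ^ 2 / 2)) := by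
  obtain ⟨f, hf, hfu⟩ := hu
  set g : ℂ → ℂ := fun w ↦ f (z + w) * cexp (-(starRingEnd ℂ z * w) - ((‖z‖ ^ 2 : ℝ) : ℂ) / 2)
  have hg : Differentiable ℂ g := by fun_prop
  have hweight (w : ℂ) : ‖g w‖ * Real.exp (-‖w‖ ^ 2) = ‖u (z + w)‖ * Real.exp (-‖w‖ ^ 2 / 2) := by
    simp only [g, hfu, norm_mul, Complex.norm_exp, mul_assoc, ← Real.exp_add]
    congr 2
    have hre : (starRingEnd ℂ z * w).re = inner ℝ z w := by rw [Complex.inner, mul_comm]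
    simp only [Complex.sub_re, Complex.neg_re, Complex.div_ofNat_re, Complex.ofReal_re, hre,
      norm_add_sq_real]
    ring
  have henorm (w : ℂ) : ‖g w‖ₑ * ENNReal.ofReal (Real.exp (-‖w‖ ^ 2))
      = ‖u (z + w)‖ₑ * ENNReal.ofReal (Real.exp (-‖w‖ ^ 2 / 2)) := by
    rw [← ofReal_norm, ← ofReal_norm, ← ENNReal.ofReal_mul (norm_nonneg _),
      ← ENNReal.ofReal_mul (norm_nonneg _), hweight]
  have hgauss : ∫⁻ w : ℂ, ENNReal.ofReal (Real.exp (-‖w‖ ^ 2)) = ENNReal.ofReal π := by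
    simpa using lintegral_exp_neg_mul_norm_sq one_pos
  calc ENNReal.ofReal π * ‖u z‖ₑ
      = ‖g 0‖ₑ * ∫⁻ w : ℂ, ENNReal.ofReal (Real.exp (-‖w‖ ^ 2)) := by
        rw [hgauss, mul_comm]
        congr 1
        simpa using (henorm 0).symm
    _ ≤ ∫⁻ w, ‖g w‖ₑ * ENNReal.ofReal (Real.exp (-‖w‖ ^ 2)) :=
        enorm_mul_lintegral_radial_le hg (ρ := fun r ↦ ENNReal.ofReal (Real.exp (-r ^ 2)))
          (by fun_prop)
    _ = _ := lintegral_congr henorm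

def gaussianMajorant (w : ℂ) : ℝ := π⁻¹ * Real.exp (-‖w‖ ^ 2 / 2)

theorem gaussianMajorant_nonneg (w : ℂ) : 0 ≤ gaussianMajorant w := by
  unfold gaussianMajorant; positivity

theorem continuous_gaussianMajorant : Continuous gaussianMajorant := by
  unfold gaussianMajorant; fun_prop

theorem lintegral_enorm_gaussianMajorant_rpow {r : ℝ} (hr : 0 < r) :
    ∫⁻ w, ‖gaussianMajorant w‖ₑ ^ r = ENNReal.ofReal (π⁻¹ ^ r * (2 * π / r)) := by
  have hpoint (w : ℂ) : ‖gaussianMajorant w‖ₑ ^ r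
      = ENNReal.ofReal (π⁻¹ ^ r) * ENNReal.ofReal (Real.exp (-(r / 2) * ‖w‖ ^ 2)) := by
    rw [Real.enorm_of_nonneg (gaussianMajorant_nonneg w),
      ENNReal.ofReal_rpow_of_nonneg (gaussianMajorant_nonneg w) hr.le, gaussianMajorant,
      Real.mul_rpow (by positivity) (by positivity), ← Real.exp_mul,
      ENNReal.ofReal_mul (by positivity)]
    ring_nf
  simp_rw [hpoint]
  rw [lintegral_const_mul' _ _ ofReal_ne_top, lintegral_exp_neg_mul_norm_sq (by positivity),
    ← ENNReal.ofReal_mul (by positivity)]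
  congr 2
  field_simp

theorem memLp_gaussianMajorant (r : ℝ≥0∞) : MemLp gaussianMajorant r volume := by
  have hmeas := continuous_gaussianMajorant.aestronglyMeasurable (μ := volume)
  rcases eq_or_ne r 0 with rfl | hr0
  · exact memLp_zero_iff_aestronglyMeasurable.2 hmeas
  rcases eq_or_ne r ∞ with rfl | hr
  · refine memLp_top_of_bound hmeas π⁻¹ (.of_forall fun w ↦ ?_)
    rw [Real.norm_of_nonneg (gaussianMajorant_nonneg w), gaussianMajorant]
    exact mul_le_of_le_one_right (by positivity) (Real.exp_le_one_iff.2 (by nlinarith))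
  refine ⟨hmeas, (eLpNorm_lt_top_iff_lintegral_rpow_enorm_lt_top hr0 hr).2 ?_⟩
  rw [lintegral_enorm_gaussianMajorant_rpow (ENNReal.toReal_pos hr0 hr)]
  exact ofReal_lt_top

theorem eLpNorm_gaussianMajorant_two :
    eLpNorm gaussianMajorant 2 volume = ENNReal.ofReal (1 / √π) := by
  rw [eLpNorm_eq_lintegral_rpow_enorm_toReal two_ne_zero ofNat_ne_top, toReal_ofNat,
    lintegral_enorm_gaussianMajorant_rpow two_pos, ENNReal.ofReal_rpow_of_nonneg (by positivity)
      (by norm_num), ← Real.sqrt_eq_rpow, Real.rpow_two, one_div, ← Real.sqrt_inv]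
  congr 2
  field_simp

theorem tildeE.continuous {u : ℂ → ℂ} (hu : tildeE u) : Continuous u := by
  obtain ⟨f, hf, hfu⟩ := hu
  have := hf.continuous
  rw [funext hfu]
  fun_prop

theorem tildeE.enorm_le_lintegral_gaussianMajorant {u : ℂ → ℂ} (hu : tildeE u) (z : ℂ) :
    ‖u z‖ₑ ≤ ∫⁻ w, ‖gaussianMajorant w‖ₑ * ‖u (z + w)‖ₑ := by
  have hψ (w : ℂ) : ‖gaussianMajorant w‖ₑ
      = ENNReal.ofReal π⁻¹ * ENNReal.ofReal (Real.exp (-‖w‖ ^ 2 / 2)) := by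
    rw [Real.enorm_of_nonneg (gaussianMajorant_nonneg w), gaussianMajorant,
      ENNReal.ofReal_mul (by positivity)]
  calc ‖u z‖ₑ = ENNReal.ofReal π⁻¹ * (ENNReal.ofReal π * ‖u z‖ₑ) := by
        rw [← mul_assoc, ← ENNReal.ofReal_mul (by positivity), inv_mul_cancel₀ Real.pi_ne_zero,
          ENNReal.ofReal_one, one_mul]
    _ ≤ ENNReal.ofReal π⁻¹ * ∫⁻ w, ‖u (z + w)‖ₑ * ENNReal.ofReal (Real.exp (-‖w‖ ^ 2 / 2)) := by
        gcongr
        exact hu.ofReal_pi_mul_enorm_le z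
    _ = ∫⁻ w, ‖gaussianMajorant w‖ₑ * ‖u (z + w)‖ₑ := by
        rw [← lintegral_const_mul' _ _ ofReal_ne_top]
        refine lintegral_congr fun w ↦ ?_
        rw [hψ]
        ring

theorem tildeE.eLpNorm_top_le {u : ℂ → ℂ} (hu : tildeE u) (p p' : ℝ≥0∞) [p.HolderConjugate p'] :
    eLpNorm u ∞ volume ≤ eLpNorm gaussianMajorant p' volume * eLpNorm u p volume := by
  have hmeas := hu.continuous.aestronglyMeasurable (μ := volume)
  rw [eLpNorm_exponent_top]
  refine eLpNormEssSup_le_of_ae_enorm_bound (.of_forall fun z ↦ ?_)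
  calc ‖u z‖ₑ ≤ ∫⁻ w, ‖gaussianMajorant w‖ₑ * ‖u (z + w)‖ₑ :=
        hu.enorm_le_lintegral_gaussianMajorant z
    _ = eLpNorm (gaussianMajorant • fun w ↦ u (z + w)) 1 volume := by
        rw [eLpNorm_one_eq_lintegral_enorm]
        refine lintegral_congr fun w ↦ ?_
        rw [Pi.smul_apply', enorm_smul]
    _ ≤ eLpNorm gaussianMajorant p' volume * eLpNorm (fun w ↦ u (z + w)) p volume :=
        eLpNorm_smul_le_mul_eLpNorm (hmeas.comp_measurePreserving (measurePreserving_add_left _ z))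
          continuous_gaussianMajorant.aestronglyMeasurable
    _ = eLpNorm gaussianMajorant p' volume * eLpNorm u p volume := by
        rw [← eLpNorm_comp_measurePreserving hmeas (measurePreserving_add_left _ z)]
        rfl

/-- Hypercontractivity: for 1 ≤ p ≤ q ≤ ∞ there is C with ‖u‖_{L^q} ≤ C‖u‖_{L^p} for
all u ∈ Ẽ; in particular ‖u‖_{L^∞} ≤ π^{-1/2} ‖u‖_{L²} for u ∈ E. -/
theorem stmt3 :
    (∀ p q : ℝ≥0∞, 1 ≤ p → p ≤ q →
      ∃ C : ℝ≥0∞, C ≠ ⊤ ∧ ∀ u : ℂ → ℂ, tildeE u →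
        eLpNorm u q volume ≤ C * eLpNorm u p volume)
    ∧ ∀ u : ℂ → ℂ, tildeE u → MemLp u 2 volume →
        eLpNorm u ⊤ volume
          ≤ ENNReal.ofReal (1 / Real.sqrt Real.pi) * eLpNorm u 2 volume := by
  refine ⟨fun p q hp hpq ↦ ?_, fun u hu _ ↦ ?_⟩
  · have := ENNReal.HolderConjugate.conjExponent hp
    set K := eLpNorm gaussianMajorant p.conjExponent volume
    have hK : K ≠ ∞ := (memLp_gaussianMajorant _).eLpNorm_ne_top
    refine ⟨K ^ (1 - p.toReal / q.toReal),
      ENNReal.rpow_ne_top_of_nonneg (sub_nonneg.2 (toReal_div_toReal_le_one hpq)) hK,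
      fun u hu ↦ ?_⟩
    exact eLpNorm_le_rpow_mul_eLpNorm_of_eLpNorm_top_le hu.continuous.aestronglyMeasurable
      (zero_lt_one.trans_le hp).ne' hpq (hu.eLpNorm_top_le p p.conjExponent)
  · simpa [eLpNorm_gaussianMajorant_two] using hu.eLpNorm_top_le 2 2
end
end

section
/- For all complex numbers a, b, c, d for which the integral converges absolutely, (1/π) ∫_ℂ e^{-2|w|² + aw + b w̄ + cw² + d w̄²} dL(w) = (1/(2√(1-cd))) e^{(da² + cb² + 2ab)/(4(1-cd))}. -/
/-!
Writing `w = x + y i`, the exponent is a quadratic polynomial in `y` with leading coefficient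
`-(2 + c + d)`; integrating out `y` by the one-dimensional formula
`∫ exp (b t² + c t + d) dt = (π / -b)^(1/2) exp (d - c² / (4b))` leaves a quadratic in `x` with
leading coefficient `-4(1 - cd)/(2 + c + d)`, to which the same formula applies again (Fubini).
Integrability of the integrand forces both leading coefficients into the open left half-plane,
since otherwise `|f(x)| + |f(-x)|` is bounded below by a positive constant. The two square roots
then have radicands in the right half-plane, so they multiply without a branch correction to
`π / (2 √(1 - cd))`.
-/

open MeasureTheory Complex Real

theorem re_neg_of_integrable_cexp_quadratic {b c d : ℂ}
    (h : Integrable fun x : ℝ => cexp (b * x ^ 2 + c * x + d)) : b.re < 0 := by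
  by_contra! hb
  have hlower (x : ℝ) : rexp d.re * (1 + c.re * x) ≤ ‖cexp (b * x ^ 2 + c * x + d)‖ := by
    have hre : (b * x ^ 2 + c * x + d).re = b.re * x ^ 2 + c.re * x + d.re := by
      simp [pow_two]
    rw [Complex.norm_exp, hre, mul_comm, Real.exp_add]
    gcongr
    exact (Real.add_one_le_exp _).trans' (by nlinarith [sq_nonneg x])
  have hconst : Integrable fun _ : ℝ => 2 * rexp d.re := by
    refine (h.norm.add h.comp_neg.norm).mono' aestronglyMeasurable_const (ae_of_all _ fun x => ?_)
    have hneg := hlower (-x)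
    rw [Real.norm_of_nonneg (by positivity), Pi.add_apply]
    push_cast at hneg ⊢
    linarith [hlower x]
  rcases integrable_const_iff.1 hconst with h0 | hfin
  · exact (by positivity : (0 : ℝ) < 2 * rexp d.re).ne' h0
  · simpa using hfin.measure_univ_lt_top

theorem Complex.mul_cpow_of_arg_add_mem_Ioc {x y : ℂ} (hx : x ≠ 0) (hy : y ≠ 0)
    (h : x.arg + y.arg ∈ Set.Ioc (-π) π) (s : ℂ) : (x * y) ^ s = x ^ s * y ^ s := by
  rw [cpow_def_of_ne_zero (mul_ne_zero hx hy), cpow_def_of_ne_zero hx, cpow_def_of_ne_zero hy,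
    (log_mul_eq_add_log_iff hx hy).2 h, add_mul, Complex.exp_add]

theorem Complex.mul_cpow_of_re_pos {x y : ℂ} (hx : 0 < x.re) (hy : 0 < y.re) (s : ℂ) :
    (x * y) ^ s = x ^ s * y ^ s := by
  have hx' := abs_lt.1 (abs_arg_lt_pi_div_two_iff.2 (Or.inl hx))
  have hy' := abs_lt.1 (abs_arg_lt_pi_div_two_iff.2 (Or.inl hy))
  exact mul_cpow_of_arg_add_mem_Ioc (ne_of_apply_ne re hx.ne') (ne_of_apply_ne re hy.ne')
    ⟨by linarith, by linarith⟩ s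

theorem Complex.ofReal_mul_cpow {r : ℝ} (hr : 0 < r) {z : ℂ} (hz : z ≠ 0) (s : ℂ) :
    (r * z) ^ s = (r : ℂ) ^ s * z ^ s :=
  mul_cpow_of_arg_add_mem_Ioc (ofReal_ne_zero.2 hr.ne') hz
    (by simpa [arg_ofReal_of_nonneg hr.le] using ⟨neg_pi_lt_arg z, arg_le_pi z⟩) s

theorem Complex.ofReal_div_cpow {r : ℝ} (hr : 0 < r) {z : ℂ} (hz : z ∈ slitPlane) (s : ℂ) :
    (r / z) ^ s = (r : ℂ) ^ s / z ^ s := by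
  rw [div_eq_mul_inv, ofReal_mul_cpow hr (inv_ne_zero (slitPlane_ne_zero hz)),
    inv_cpow _ _ (slitPlane_arg_ne_pi hz), div_eq_mul_inv]

theorem pi_inv_mul_cpow_half_mul_cpow_half {p q : ℂ} (hp : 0 < p.re) (hq : 0 < q.re) :
    (π : ℂ)⁻¹ * ((π / p) ^ (1 / 2 : ℂ) * (π / q) ^ (1 / 2 : ℂ))
      = 1 / (2 * (p * q / 4) ^ (1 / 2 : ℂ)) := by
  have hpq0 : p * q ≠ 0 := mul_ne_zero (ne_of_apply_ne re hp.ne') (ne_of_apply_ne re hq.ne')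
  have hsqrt4 : (2 : ℂ) * (p * q / 4) ^ (1 / 2 : ℂ) = p ^ (1 / 2 : ℂ) * q ^ (1 / 2 : ℂ) := by
    have h2 : ((4 : ℝ) : ℂ) ^ (1 / 2 : ℂ) = 2 := by
      rw [show ((4 : ℝ) : ℂ) = 2 ^ 2 by norm_num, one_div]
      exact sq_cpow_two_inv (by norm_num)
    have h4 : p * q = (4 : ℝ) * (p * q / 4) := by push_cast; ring
    rw [← mul_cpow_of_re_pos hp hq]
    conv_rhs => rw [h4, ofReal_mul_cpow four_pos (div_ne_zero hpq0 (by norm_num)), h2]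
  have hsqrtπ : (π : ℂ) ^ (1 / 2 : ℂ) * (π : ℂ) ^ (1 / 2 : ℂ) = π := by
    rw [← cpow_add _ _ (ofReal_ne_zero.2 pi_ne_zero)]
    norm_num
  rw [ofReal_div_cpow pi_pos (mem_slitPlane_iff.2 (.inl hp)),
    ofReal_div_cpow pi_pos (mem_slitPlane_iff.2 (.inl hq)), div_mul_div_comm, hsqrtπ, hsqrt4,
    ← mul_div_assoc, inv_mul_cancel₀ (ofReal_ne_zero.2 pi_ne_zero)]

theorem Complex.integrable_comp_add_mul_I {E : Type*} [NormedAddCommGroup E] {f : ℂ → E}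
    (hf : Integrable f) : Integrable fun q : ℝ × ℝ => f (q.1 + q.2 * I) := by
  simpa [Function.comp_def, measurableEquivRealProd_symm_apply, mk_eq_add_mul_I] using
    (volume_preserving_equiv_real_prod.symm.integrable_comp_emb
      measurableEquivRealProd.symm.measurableEmbedding).2 hf

theorem Complex.integral_eq_integral_integral {E : Type*} [NormedAddCommGroup E] [NormedSpace ℝ E]
    {f : ℂ → E} (hf : Integrable f) : ∫ w, f w = ∫ x : ℝ, ∫ y : ℝ, f (x + y * I) := by
  rw [← volume_preserving_equiv_real_prod.symm.integral_comp
    measurableEquivRealProd.symm.measurableEmbedding]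
  have hf' := integrable_comp_add_mul_I hf
  rw [Measure.volume_eq_prod] at hf' ⊢
  simpa [measurableEquivRealProd_symm_apply, mk_eq_add_mul_I] using integral_prod _ hf'

section GaussianProd

variable {b β γ δ ε : ℂ}

theorem integral_cexp_quadratic_section (hb : b.re < 0) (x : ℝ) :
    ∫ y : ℝ, cexp (b * y ^ 2 + (β * x + γ) * y + (δ * x ^ 2 + ε * x))
      = (π / -b) ^ (1 / 2 : ℂ) * cexp ((δ - β ^ 2 / (4 * b)) * x ^ 2
          + (ε - β * γ / (2 * b)) * x + -γ ^ 2 / (4 * b)) := by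
  have hb0 : b ≠ 0 := ne_of_apply_ne re hb.ne
  rw [integral_cexp_quadratic hb]
  congr 2
  field_simp
  ring

theorem re_neg_of_integrable_cexp_quadratic_prod
    (h : Integrable fun q : ℝ × ℝ =>
      cexp (b * q.2 ^ 2 + (β * q.1 + γ) * q.2 + (δ * q.1 ^ 2 + ε * q.1))) : b.re < 0 := by
  rw [Measure.volume_eq_prod] at h
  obtain ⟨x, hx⟩ := h.prod_right_ae.exists
  exact re_neg_of_integrable_cexp_quadratic (c := β * x + γ) (d := δ * x ^ 2 + ε * x) hx

theorem re_schur_neg_of_integrable_cexp_quadratic_prod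
    (h : Integrable fun q : ℝ × ℝ =>
      cexp (b * q.2 ^ 2 + (β * q.1 + γ) * q.2 + (δ * q.1 ^ 2 + ε * q.1))) :
    (δ - β ^ 2 / (4 * b)).re < 0 := by
  have hb := re_neg_of_integrable_cexp_quadratic_prod h
  have hpre : (π / -b : ℂ) ^ (1 / 2 : ℂ) ≠ 0 := by
    simp [cpow_eq_zero_iff, pi_ne_zero, (ne_of_apply_ne re hb.ne : b ≠ 0)]
  apply re_neg_of_integrable_cexp_quadratic (c := ε - β * γ / (2 * b)) (d := -γ ^ 2 / (4 * b))
  rw [Measure.volume_eq_prod] at h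
  refine (h.integral_prod_left.const_mul ((π / -b : ℂ) ^ (1 / 2 : ℂ))⁻¹).congr
    (ae_of_all _ fun x => ?_)
  simp only [integral_cexp_quadratic_section hb]
  exact inv_mul_cancel_left₀ hpre _

theorem integral_integral_cexp_quadratic_prod
    (h : Integrable fun q : ℝ × ℝ =>
      cexp (b * q.2 ^ 2 + (β * q.1 + γ) * q.2 + (δ * q.1 ^ 2 + ε * q.1))) :
    ∫ x : ℝ, ∫ y : ℝ, cexp (b * y ^ 2 + (β * x + γ) * y + (δ * x ^ 2 + ε * x))
      = (π / -b) ^ (1 / 2 : ℂ) * (π / -(δ - β ^ 2 / (4 * b))) ^ (1 / 2 : ℂ)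
        * cexp (-γ ^ 2 / (4 * b) - (ε - β * γ / (2 * b)) ^ 2 / (4 * (δ - β ^ 2 / (4 * b)))) := by
  simp only [integral_cexp_quadratic_section (re_neg_of_integrable_cexp_quadratic_prod h)]
  rw [integral_const_mul,
    integral_cexp_quadratic (re_schur_neg_of_integrable_cexp_quadratic_prod h), mul_assoc]

end GaussianProd

theorem gaussian_exponent_add_mul_I (a b c d : ℂ) (x y : ℝ) :
    -2 * ((‖(x + y * I : ℂ)‖ ^ 2 : ℝ) : ℂ) + a * (x + y * I) + b * (starRingEnd ℂ) (x + y * I)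
        + c * (x + y * I) ^ 2 + d * ((starRingEnd ℂ) (x + y * I)) ^ 2
      = -(2 + c + d) * y ^ 2 + (2 * I * (c - d) * x + I * (a - b)) * y
        + ((-2 + c + d) * x ^ 2 + (a + b) * x) := by
  rw [Complex.sq_norm, normSq_add_mul_I, map_add, map_mul, conj_ofReal, conj_ofReal, conj_I]
  push_cast
  linear_combination (c + d) * (y : ℂ) ^ 2 * I_sq

/-- Gaussian integral identity:
(1/π) ∫ e^{-2|w|² + aw + b w̄ + cw² + d w̄²} dL(w) = e^{(da²+cb²+2ab)/(4(1-cd))} / (2√(1-cd)). -/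
theorem stmt5 (a b c d : ℂ)
    (h : Integrable (fun w : ℂ =>
      Complex.exp (-2 * ((‖w‖ ^ 2 : ℝ) : ℂ) + a * w + b * (starRingEnd ℂ) w
        + c * w ^ 2 + d * ((starRingEnd ℂ) w) ^ 2))) :
    (Real.pi : ℂ)⁻¹ * ∫ w : ℂ,
        Complex.exp (-2 * ((‖w‖ ^ 2 : ℝ) : ℂ) + a * w + b * (starRingEnd ℂ) w
          + c * w ^ 2 + d * ((starRingEnd ℂ) w) ^ 2)
      = 1 / (2 * (1 - c * d) ^ ((1 : ℂ) / 2))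
        * Complex.exp ((d * a ^ 2 + c * b ^ 2 + 2 * a * b) / (4 * (1 - c * d))) := by
  have hcoord := Complex.integrable_comp_add_mul_I h
  simp only [gaussian_exponent_add_mul_I] at hcoord
  rw [Complex.integral_eq_integral_integral h]
  simp only [gaussian_exponent_add_mul_I]
  rw [integral_integral_cexp_quadratic_prod hcoord]
  have hp : 0 < (2 + c + d).re := by
    simpa using neg_pos.2 (re_neg_of_integrable_cexp_quadratic_prod hcoord)
  have hp0 : 2 + c + d ≠ 0 := ne_of_apply_ne re hp.ne'
  have hq := re_schur_neg_of_integrable_cexp_quadratic_prod hcoord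
  have hschur : (-2 + c + d) - (2 * I * (c - d)) ^ 2 / (4 * -(2 + c + d))
      = -(4 * (1 - c * d) / (2 + c + d)) := by
    field_simp
    linear_combination (4 * (c - d) ^ 2) * I_sq
  rw [hschur, neg_re, neg_lt_zero] at hq
  have hu0 : 1 - c * d ≠ 0 := by rintro hu; simp [hu] at hq
  rw [hschur, neg_neg, neg_neg, ← mul_assoc, pi_inv_mul_cpow_half_mul_cpow_half hp hq]
  congr 3
  · field_simp
  · field_simp
    ring_nf
    simp only [I_sq, I_pow_four]
    ring
end

section
/- Let A₁, A₂ ∈ ℂ with |A₁| < 1/2, |A₂| < 1/2, satisfying (A₁+A₂)/(4(1-(A₁+A₂)Ā₂)) = A₁ and (A₁+A₂)/(4(1-(A₁+A₂)Ā₁)) = A₂. Then A₁ = A₂ = 0. -/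
open Complex

noncomputable section

open ComplexConjugate

/-!
Write `S = A₁ + A₂`. Clearing the (nonvanishing) denominators and adding the two equations gives
`S * (1 - 2 (A₁ Ā₂ + A₂ Ā₁)) = 0`. Since `‖2 (A₁ Ā₂ + A₂ Ā₁)‖ ≤ 4 ‖A₁‖ ‖A₂‖ < 1`, the second factor
is nonzero, so `S = 0`; then the first equation reads `0 = A₁`.
-/

lemma one_sub_ne_zero_of_norm_lt_one {R : Type*} [NormedRing R] [NormOneClass R] {a : R}
    (h : ‖a‖ < 1) : 1 - a ≠ 0 :=
  sub_ne_zero.mpr fun ha => by simp [← ha] at h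

lemma norm_mul_conj_lt_one {z w : ℂ} (hz : ‖z‖ < 1) (hw : ‖w‖ < 1 / 2) :
    ‖z * conj w‖ < 1 := by
  rw [norm_mul, norm_conj]
  nlinarith [norm_nonneg z, norm_nonneg w]

lemma norm_two_mul_add_mul_conj_lt_one {A₁ A₂ : ℂ} (h₁ : ‖A₁‖ < 1 / 2) (h₂ : ‖A₂‖ < 1 / 2) :
    ‖2 * (A₁ * conj A₂ + A₂ * conj A₁)‖ < 1 :=
  calc ‖2 * (A₁ * conj A₂ + A₂ * conj A₁)‖
      ≤ 2 * (‖A₁ * conj A₂‖ + ‖A₂ * conj A₁‖) := by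
        rw [norm_mul, Complex.norm_two]
        gcongr
        exact norm_add_le _ _
    _ = 4 * (‖A₁‖ * ‖A₂‖) := by
        simp only [norm_mul, norm_conj]
        ring
    _ < 1 := by nlinarith [norm_nonneg A₁, norm_nonneg A₂]

lemma add_mul_one_sub_two_mul_eq_zero {A₁ A₂ : ℂ}
    (e₁ : A₁ + A₂ = A₁ * (4 * (1 - (A₁ + A₂) * conj A₂)))
    (e₂ : A₁ + A₂ = A₂ * (4 * (1 - (A₁ + A₂) * conj A₁))) :
    (A₁ + A₂) * (1 - 2 * (A₁ * conj A₂ + A₂ * conj A₁)) = 0 := by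
  linear_combination (-1 / 2 : ℂ) * e₁ + (-1 / 2 : ℂ) * e₂

/-- If |A₁|,|A₂| < 1/2 and (A₁+A₂)/(4(1-(A₁+A₂)Ā₂)) = A₁, (A₁+A₂)/(4(1-(A₁+A₂)Ā₁)) = A₂,
then A₁ = A₂ = 0. -/
theorem stmt7 (A₁ A₂ : ℂ) (h₁ : ‖A₁‖ < 1 / 2) (h₂ : ‖A₂‖ < 1 / 2)
    (e₁ : (A₁ + A₂) / (4 * (1 - (A₁ + A₂) * (starRingEnd ℂ) A₂)) = A₁)
    (e₂ : (A₁ + A₂) / (4 * (1 - (A₁ + A₂) * (starRingEnd ℂ) A₁)) = A₂) :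
    A₁ = 0 ∧ A₂ = 0 := by
  have hS : ‖A₁ + A₂‖ < 1 := (norm_add_le _ _).trans_lt (by linarith)
  have hden : ∀ {B : ℂ}, ‖B‖ < 1 / 2 → 4 * (1 - (A₁ + A₂) * conj B) ≠ 0 := fun hB =>
    mul_ne_zero (by norm_num) (one_sub_ne_zero_of_norm_lt_one (norm_mul_conj_lt_one hS hB))
  have hprod := add_mul_one_sub_two_mul_eq_zero ((div_eq_iff (hden h₂)).mp e₁)
    ((div_eq_iff (hden h₁)).mp e₂)
  have hsum : A₁ + A₂ = 0 := (mul_eq_zero.mp hprod).resolve_right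
    (one_sub_ne_zero_of_norm_lt_one (norm_two_mul_add_mul_conj_lt_one h₁ h₂))
  have hA₁ : A₁ = 0 := by rw [← e₁, hsum, zero_div]
  exact ⟨hA₁, by linear_combination hsum - hA₁⟩
end
end
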